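/- Fix a positive integer M. Define f(m) = 2φ(m)/|GL₂(ℤ/mℤ)| if M ∣ m and f(m) = φ(m)/|GL₂(ℤ/mℤ)| otherwise. Then ∑_{m≥1} f(m) = C_{d₁} · (1 + M^{-3} ∏_{ℓ ∣ M} ((1−ℓ^{-2})(1−ℓ^{-3}) + ℓ^{-3})^{-1}), where C_{d₁} = ∑_{m≥1} φ(m)/|GL₂(ℤ/mℤ)| = ∏_ℓ (1 + ℓ²/((ℓ²−1)(ℓ³−1))). -/

import Mathlib

/-!
The function `g m = φ m / |GL₂(ℤ/mℤ)|` is multiplicative, and `g (ℓ ^ e) = ℓ² / (ℓ² - 1) · ℓ^(-3e)`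
for `e ≥ 1`: `GL₂(ℤ/ℓ^e)` is the preimage of `GL₂(𝔽_ℓ)` under reduction, whose kernel has
`ℓ^(4(e-1))` elements. The Euler product of `g` gives `C`.

The extra sum over the multiples of `M` is `g M · ∑ₖ h k` with `h k = g (k M) / g M`, which is again
multiplicative. Since `g (ℓ ^ (e + a)) = ℓ^(-3e) g (ℓ ^ a)` for `a ≥ 1`, the Euler factor of `h` at
`ℓ ∣ M` is the geometric series `(1 - ℓ⁻³)⁻¹`, while at `ℓ ∤ M` it is that of `g`. Comparing the two
Euler products leaves a finite product over `ℓ ∣ M`, which together with `g M` is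
`M⁻³ ∏_{ℓ ∣ M} ((1 - ℓ⁻²)(1 - ℓ⁻³) + ℓ⁻³)⁻¹`.
-/

open Finset

theorem AddMonoidHom.card_preimage_of_surjective {G H : Type*} [AddGroup G] [AddGroup H]
    (f : G →+ H) (hf : Function.Surjective f) (s : Set H) :
    Nat.card (f ⁻¹' s) = Nat.card f.ker * Nat.card s := by
  let e := QuotientAddGroup.quotientKerEquivOfSurjective f hf
  have : f ⁻¹' s = QuotientAddGroup.mk ⁻¹' (e ⁻¹' s) := rfl
  rw [this, Nat.card_congr (QuotientAddGroup.preimageMkEquivAddSubgroupProdSet _ _), Nat.card_prod,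
    Nat.card_preimage_of_injective e.injective (by simp [e.surjective.range_eq])]

theorem ZMod.isUnit_iff_isUnit_castHom_of_prime_pow {p k : ℕ} (hp : p.Prime) (hk : k ≠ 0)
    (a : ZMod (p ^ k)) :
    IsUnit a ↔ IsUnit (ZMod.castHom (dvd_pow_self p hk) (ZMod p) a) := by
  have : NeZero (p ^ k) := ⟨pow_ne_zero _ hp.ne_zero⟩
  conv_lhs => rw [← ZMod.natCast_zmod_val a]
  rw [ZMod.castHom_apply, ZMod.cast_eq_val, ZMod.isUnit_iff_coprime, ZMod.isUnit_iff_coprime,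
    Nat.coprime_pow_right_iff (Nat.pos_of_ne_zero hk)]

namespace Matrix

variable {n : Type*} [Fintype n] [DecidableEq n]

def prodRingEquiv (R S : Type*) [CommRing R] [CommRing S] :
    Matrix n n (R × S) ≃+* Matrix n n R × Matrix n n S :=
  { (RingHom.fst R S).mapMatrix.prod (RingHom.snd R S).mapMatrix with
    invFun B := of fun i j ↦ (B.1 i j, B.2 i j)
    left_inv _ := rfl
    right_inv _ := rfl }

theorem card_GL_zmod_mul_of_coprime {a b : ℕ} (h : a.Coprime b) :
    Nat.card (GL n (ZMod (a * b))) = Nat.card (GL n (ZMod a)) * Nat.card (GL n (ZMod b)) := by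
  rw [← Nat.card_prod, Nat.card_congr ((Units.mapEquiv ((ZMod.chineseRemainder h).mapMatrix.trans
    (prodRingEquiv _ _)).toMulEquiv).trans MulEquiv.prodUnits).toEquiv]

theorem card_GL_eq_card_setOf_isUnit_det (R : Type*) [CommRing R] :
    Nat.card (GL n R) = Nat.card {A : Matrix n n R | IsUnit A.det} := by
  rw [← Nat.card_range_of_injective Units.val_injective]
  congr! 2
  ext A
  exact isUnit_iff_isUnit_det A

theorem card_zmod (m : ℕ) [NeZero m] :
    Nat.card (Matrix n n (ZMod m)) = m ^ (Fintype.card n ^ 2) := by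
  simp [Nat.card_eq_fintype_card, Matrix, ZMod.card, ← pow_mul, sq]

theorem card_GL_zmod_prime_pow {p k : ℕ} (hp : p.Prime) (hk : k ≠ 0) :
    Nat.card (GL n (ZMod (p ^ k))) =
      p ^ ((k - 1) * Fintype.card n ^ 2) * Nat.card (GL n (ZMod p)) := by
  have : NeZero p := ⟨hp.ne_zero⟩
  let π := (ZMod.castHom (dvd_pow_self p hk) (ZMod p)).mapMatrix (m := n)
  have hπ : Function.Surjective π := fun B ↦
    ⟨B.map fun x ↦ (x.val : ZMod (p ^ k)), by ext; simp [π]⟩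
  have hunits : {A : Matrix n n (ZMod (p ^ k)) | IsUnit A.det} = π ⁻¹' {B | IsUnit B.det} := by
    ext A
    exact (ZMod.isUnit_iff_isUnit_castHom_of_prime_pow hp hk _).trans
      (by rw [RingHom.map_det]; rfl)
  have hcard := π.toAddMonoidHom.card_preimage_of_surjective hπ Set.univ
  obtain ⟨k, rfl⟩ := Nat.exists_eq_add_one_of_ne_zero hk
  rw [Set.preimage_univ, Nat.card_univ, Nat.card_univ, card_zmod, card_zmod, ← pow_mul,
    add_one_mul, pow_add] at hcard
  rw [card_GL_eq_card_setOf_isUnit_det, card_GL_eq_card_setOf_isUnit_det, hunits,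
    Nat.add_sub_cancel]
  exact (π.toAddMonoidHom.card_preimage_of_surjective hπ _).trans
    (by rw [Nat.eq_of_mul_eq_mul_right (pow_pos hp.pos _) hcard.symm])

end Matrix

namespace ArithmeticFunction

namespace IsMultiplicative

variable {R : Type*} [CommMonoidWithZero R] {f : ArithmeticFunction R}

theorem map_eq_prod_of_primeFactors_subset (hf : f.IsMultiplicative) {n : ℕ} (hn : n ≠ 0)
    {s : Finset ℕ} (hs : n.primeFactors ⊆ s) :
    f n = ∏ p ∈ s, f (p ^ n.factorization p) := by
  rw [hf.multiplicative_factorization f hn, Finsupp.prod, Nat.support_factorization]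
  exact prod_subset hs fun p _ hp ↦ by
    rw [Finsupp.notMem_support_iff.mp hp, pow_zero, hf.map_one]

theorem map_mul_mul_mul_map_of_coprime (hf : f.IsMultiplicative) {k₁ k₂ M : ℕ} (h₁ : k₁ ≠ 0)
    (h₂ : k₂ ≠ 0) (hM : M ≠ 0) (hk : k₁.Coprime k₂) :
    f (k₁ * k₂ * M) * f M = f (k₁ * M) * f (k₂ * M) := by
  have hn : k₁ * k₂ * M ≠ 0 := by positivity
  have hsub {d : ℕ} (hd : d ∣ k₁ * k₂ * M) := Nat.primeFactors_mono hd hn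
  rw [hf.map_eq_prod_of_primeFactors_subset hn subset_rfl,
    hf.map_eq_prod_of_primeFactors_subset hM (hsub (Dvd.intro_left _ rfl)),
    hf.map_eq_prod_of_primeFactors_subset (by positivity) (hsub (by use k₂; ring)),
    hf.map_eq_prod_of_primeFactors_subset (by positivity) (hsub (by use k₁; ring)),
    ← prod_mul_distrib, ← prod_mul_distrib]
  refine prod_congr rfl fun p _ ↦ ?_
  simp only [Nat.factorization_mul (mul_ne_zero h₁ h₂) hM, Nat.factorization_mul h₁ hM,
    Nat.factorization_mul h₂ hM, Nat.factorization_mul_of_coprime hk, Finsupp.add_apply]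
  have : k₁.factorization p = 0 ∨ k₂.factorization p = 0 := by
    by_contra! h
    have := Nat.eq_one_of_dvd_coprimes hk (Nat.dvd_of_factorization_pos h.1)
      (Nat.dvd_of_factorization_pos h.2)
    simp_all
  rcases this with h | h <;> simp [h, mul_comm]

theorem le_inv_pow_of_prime_pow {f : ArithmeticFunction ℝ} (hf : f.IsMultiplicative)
    (hf₀ : ∀ n, 0 ≤ f n) {s : ℕ}
    (hpow : ∀ p e, p.Prime → e ≠ 0 → f (p ^ e) ≤ (((p ^ e : ℕ) : ℝ) ^ s)⁻¹) (n : ℕ) :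
    f n ≤ ((n : ℝ) ^ s)⁻¹ := by
  rcases eq_or_ne n 0 with rfl | hn
  · simp
  rw [hf.map_eq_prod_of_primeFactors_subset hn subset_rfl]
  conv_rhs => rw [Nat.prod_primeFactors_pow_factorization hn]
  push_cast
  rw [← prod_pow, ← prod_inv_distrib]
  refine prod_le_prod (fun p _ ↦ hf₀ _) fun p hp ↦ ?_
  exact_mod_cast hpow p _ (Nat.prime_of_mem_primeFactors hp) (Finsupp.mem_support_iff.mp hp)

end IsMultiplicative

section MulShift

variable {K : Type*} [Field K]

def mulShift (f : ArithmeticFunction K) (M : ℕ) : ArithmeticFunction K :=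
  ⟨fun k ↦ f (k * M) / f M, by simp⟩

@[simp]
theorem mulShift_apply (f : ArithmeticFunction K) (M k : ℕ) :
    f.mulShift M k = f (k * M) / f M :=
  rfl

variable {f : ArithmeticFunction K} {M : ℕ}

theorem IsMultiplicative.mulShift (hf : f.IsMultiplicative) (hM : f M ≠ 0) :
    (f.mulShift M).IsMultiplicative := by
  have hM₀ : M ≠ 0 := by rintro rfl; simp at hM
  refine IsMultiplicative.iff_ne_zero.mpr ⟨by simp [hM], fun h₁ h₂ hk ↦ ?_⟩
  simp only [mulShift_apply]
  rw [div_mul_div_comm, ← hf.map_mul_mul_mul_map_of_coprime h₁ h₂ hM₀ hk, mul_div_mul_right _ _ hM]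

theorem IsMultiplicative.mulShift_apply_prime_pow (hf : f.IsMultiplicative) (hM : f M ≠ 0)
    {p : ℕ} (hp : p.Prime) (e : ℕ) :
    f.mulShift M (p ^ e) = f (p ^ (e + M.factorization p)) / f (p ^ M.factorization p) := by
  have hM₀ : M ≠ 0 := by rintro rfl; simp at hM
  have hcop (i : ℕ) : (p ^ i).Coprime (M / p ^ M.factorization p) :=
    (Nat.coprime_ordCompl hp hM₀).pow_left i
  have hM' : f (M / p ^ M.factorization p) ≠ 0 := by
    intro h
    apply hM
    rw [← Nat.ordProj_mul_ordCompl_eq_self M p, hf.map_mul_of_coprime (hcop _), h, mul_zero]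
  rw [mulShift_apply]
  conv_lhs => rw [← Nat.ordProj_mul_ordCompl_eq_self M p]
  rw [← mul_assoc, ← pow_add, hf.map_mul_of_coprime (hcop _), hf.map_mul_of_coprime (hcop _),
    mul_div_mul_right _ _ hM']

end MulShift

theorem IsMultiplicative.hasProd_tsum_mulShift {K : Type*} [NormedField K] [CompleteSpace K]
    {f : ArithmeticFunction K} (hf : f.IsMultiplicative) (hsum : Summable (‖f ·‖)) {M : ℕ}
    (hM : f M ≠ 0) :
    HasProd (fun p : Nat.Primes ↦
        ∑' e, f (p ^ (e + M.factorization p)) / f (p ^ M.factorization p))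
      (∑' k, f.mulShift M k) := by
  have hM₀ : M ≠ 0 := by rintro rfl; simp at hM
  have hsum' : Summable (‖f.mulShift M ·‖) := by
    refine ((hsum.comp_injective (mul_left_injective₀ hM₀)).div_const ‖f M‖).congr fun k ↦ ?_
    simp [norm_div]
  convert (hf.mulShift hM).eulerProduct_hasProd hsum' using 3 with p
  exact funext fun e ↦ (hf.mulShift_apply_prime_pow hM p.prop e).symm

end ArithmeticFunction

open ArithmeticFunction

noncomputable def totientDivCardGL₂ : ArithmeticFunction ℝ :=
  ⟨fun m ↦ m.totient / Nat.card (GL (Fin 2) (ZMod m)), by simp⟩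

theorem totientDivCardGL₂_apply (m : ℕ) :
    totientDivCardGL₂ m = m.totient / Nat.card (GL (Fin 2) (ZMod m)) :=
  rfl

theorem Nat.Prime.two_le_cast {p : ℕ} (hp : p.Prime) : (2 : ℝ) ≤ p := by exact_mod_cast hp.two_le

theorem Nat.Prime.one_lt_cast_pow {p k : ℕ} (hp : p.Prime) (hk : k ≠ 0) : (1 : ℝ) < (p : ℝ) ^ k :=
  one_lt_pow₀ (by exact_mod_cast hp.one_lt) hk

theorem totientDivCardGL₂_prime_pow {p e : ℕ} (hp : p.Prime) (he : e ≠ 0) :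
    totientDivCardGL₂ (p ^ e) = (p : ℝ) ^ 2 / ((p : ℝ) ^ 2 - 1) * ((p : ℝ) ^ 3)⁻¹ ^ e := by
  have : Fact p.Prime := ⟨hp⟩
  have hp2 := hp.two_le_cast
  rw [totientDivCardGL₂_apply, Matrix.card_GL_zmod_prime_pow hp he, Matrix.card_GL_field,
    Nat.totient_prime_pow hp (Nat.pos_of_ne_zero he), Fin.prod_univ_two, ZMod.card,
    Fintype.card_fin]
  simp only [Fin.val_zero, Fin.val_one, pow_zero, pow_one]
  obtain ⟨e, rfl⟩ := Nat.exists_eq_add_one_of_ne_zero he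
  have : p ≤ p ^ 2 := Nat.le_self_pow two_ne_zero p
  push_cast [Nat.add_sub_cancel, hp.one_le, Nat.one_le_pow _ _ hp.pos, this]
  have : (p : ℝ) ≠ 0 := by linarith
  have : (p : ℝ) - 1 ≠ 0 := by linarith
  have : (p : ℝ) ^ 2 - 1 ≠ 0 := by nlinarith
  rw [inv_pow, ← pow_mul]
  field_simp
  ring

theorem isMultiplicative_totientDivCardGL₂ : totientDivCardGL₂.IsMultiplicative := by
  refine IsMultiplicative.iff_ne_zero.mpr ⟨by simp [totientDivCardGL₂_apply], fun _ _ h ↦ ?_⟩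
  simp only [totientDivCardGL₂_apply, Nat.totient_mul h, Matrix.card_GL_zmod_mul_of_coprime h]
  push_cast
  exact (div_mul_div_comm _ _ _ _).symm

theorem totientDivCardGL₂_nonneg (m : ℕ) : 0 ≤ totientDivCardGL₂ m := by
  rw [totientDivCardGL₂_apply]
  positivity

theorem totientDivCardGL₂_ne_zero {m : ℕ} (hm : m ≠ 0) : totientDivCardGL₂ m ≠ 0 := by
  have : NeZero m := ⟨hm⟩
  rw [totientDivCardGL₂_apply]
  exact div_ne_zero (by simpa using hm) (by simp)

theorem totientDivCardGL₂_prime_pow_le {p e : ℕ} (hp : p.Prime) (he : e ≠ 0) :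
    totientDivCardGL₂ (p ^ e) ≤ (((p ^ e : ℕ) : ℝ) ^ 2)⁻¹ := by
  have hp2 := hp.two_le_cast
  set x : ℝ := (p : ℝ) ^ e
  have hx : (p : ℝ) ≤ x := le_self_pow₀ (by linarith) he
  have hc : (p : ℝ) ^ 2 / ((p : ℝ) ^ 2 - 1) ≤ x := by
    have h1 := hp.one_lt_cast_pow two_ne_zero
    rw [div_le_iff₀ (by linarith)]
    nlinarith [mul_le_mul_of_nonneg_right (hp2.trans hx) (by linarith : (0 : ℝ) ≤ p ^ 2 - 1)]
  rw [totientDivCardGL₂_prime_pow hp he, inv_pow, ← pow_mul, mul_comm 3, pow_mul, Nat.cast_pow]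
  calc (p : ℝ) ^ 2 / ((p : ℝ) ^ 2 - 1) * (x ^ 3)⁻¹ ≤ x * (x ^ 3)⁻¹ := by gcongr
    _ = (x ^ 2)⁻¹ := by
      have : x ≠ 0 := by positivity
      field_simp

theorem summable_norm_totientDivCardGL₂ : Summable (‖totientDivCardGL₂ ·‖) := by
  refine (Real.summable_nat_pow_inv.mpr one_lt_two).of_nonneg_of_le (fun _ ↦ norm_nonneg _)
    fun n ↦ ?_
  rw [Real.norm_of_nonneg (totientDivCardGL₂_nonneg n)]
  exact isMultiplicative_totientDivCardGL₂.le_inv_pow_of_prime_pow totientDivCardGL₂_nonneg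
    (fun _ _ hp he ↦ totientDivCardGL₂_prime_pow_le hp he) n

noncomputable def eulerFactorGL₂ (ℓ : ℕ) : ℝ :=
  1 + (ℓ : ℝ) ^ 2 / (((ℓ : ℝ) ^ 2 - 1) * ((ℓ : ℝ) ^ 3 - 1))

theorem tsum_totientDivCardGL₂_prime_pow {p : ℕ} (hp : p.Prime) :
    ∑' e, totientDivCardGL₂ (p ^ e) = eulerFactorGL₂ p := by
  have h2 := hp.one_lt_cast_pow two_ne_zero
  have h3 := hp.one_lt_cast_pow three_ne_zero
  have hsum : Summable fun e ↦ totientDivCardGL₂ (p ^ e) :=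
    summable_norm_totientDivCardGL₂.of_norm.comp_injective (Nat.pow_right_injective hp.two_le)
  have hterm (e : ℕ) : totientDivCardGL₂ (p ^ (e + 1)) =
      (p : ℝ) ^ 2 / ((p : ℝ) ^ 2 - 1) * ((p : ℝ) ^ 3)⁻¹ * ((p : ℝ) ^ 3)⁻¹ ^ e := by
    rw [totientDivCardGL₂_prime_pow hp e.add_one_ne_zero, pow_succ']
    ring
  rw [hsum.tsum_eq_zero_add, pow_zero, isMultiplicative_totientDivCardGL₂.map_one,
    tsum_congr hterm, tsum_mul_left,
    tsum_geometric_of_lt_one (by positivity) (inv_lt_one_of_one_lt₀ h3), eulerFactorGL₂]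
  have : (p : ℝ) ^ 2 - 1 ≠ 0 := by linarith
  have : (p : ℝ) ^ 3 - 1 ≠ 0 := by linarith
  have : (p : ℝ) ≠ 0 := by exact_mod_cast hp.ne_zero
  field_simp

theorem totientDivCardGL₂_prime_pow_add_div {p a : ℕ} (hp : p.Prime) (ha : a ≠ 0) (e : ℕ) :
    totientDivCardGL₂ (p ^ (e + a)) / totientDivCardGL₂ (p ^ a) = ((p : ℝ) ^ 3)⁻¹ ^ e := by
  have := hp.one_lt_cast_pow two_ne_zero
  have := hp.pos
  rw [totientDivCardGL₂_prime_pow hp (by omega), totientDivCardGL₂_prime_pow hp ha, pow_add,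
    ← mul_assoc, mul_div_mul_right _ _ (by positivity), mul_div_cancel_left₀]
  exact div_ne_zero (by positivity) (by linarith)

theorem hasProd_eulerFactorGL₂ :
    HasProd (fun p : Nat.Primes ↦ eulerFactorGL₂ p) (∑' n, totientDivCardGL₂ n) :=
  (isMultiplicative_totientDivCardGL₂.eulerProduct_hasProd
      summable_norm_totientDivCardGL₂).congr_fun
    fun p ↦ (tsum_totientDivCardGL₂_prime_pow p.prop).symm

theorem eulerFactorGL₂_pos {p : ℕ} (hp : p.Prime) : 0 < eulerFactorGL₂ p := by
  have h2 := hp.one_lt_cast_pow two_ne_zero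
  have h3 := hp.one_lt_cast_pow three_ne_zero
  have : 0 < (p : ℝ) ^ 2 / (((p : ℝ) ^ 2 - 1) * ((p : ℝ) ^ 3 - 1)) := by
    apply div_pos <;> nlinarith
  unfold eulerFactorGL₂
  linarith

theorem hasProd_mulShift_totientDivCardGL₂ {M : ℕ} (hM : M ≠ 0) :
    HasProd (fun p : Nat.Primes ↦
        if (p : ℕ) ∣ M then (1 - ((p : ℝ) ^ 3)⁻¹)⁻¹ else eulerFactorGL₂ p)
      (∑' k, totientDivCardGL₂.mulShift M k) := by
  refine (isMultiplicative_totientDivCardGL₂.hasProd_tsum_mulShift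
    summable_norm_totientDivCardGL₂ (totientDivCardGL₂_ne_zero hM)).congr_fun fun p ↦ ?_
  split_ifs with hpM
  · rw [tsum_congr (totientDivCardGL₂_prime_pow_add_div p.prop
      (p.prop.factorization_pos_of_dvd hM hpM).ne'),
      tsum_geometric_of_lt_one (by positivity)
        (inv_lt_one_of_one_lt₀ (p.prop.one_lt_cast_pow three_ne_zero))]
  · simp [Nat.factorization_eq_zero_of_not_dvd hpM, isMultiplicative_totientDivCardGL₂.map_one,
      tsum_totientDivCardGL₂_prime_pow p.prop]

theorem tsum_mulShift_totientDivCardGL₂ {M : ℕ} (hM : M ≠ 0) :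
    ∑' k, totientDivCardGL₂.mulShift M k = (∑' n, totientDivCardGL₂ n) *
      ∏ p ∈ M.primeFactors, (1 - ((p : ℝ) ^ 3)⁻¹)⁻¹ / eulerFactorGL₂ p := by
  let G : ℕ → ℝ := fun p ↦ if p ∣ M then (1 - ((p : ℝ) ^ 3)⁻¹)⁻¹ / eulerFactorGL₂ p else 1
  let s := M.primeFactors.preimage ((↑) : Nat.Primes → ℕ) Subtype.val_injective.injOn
  have hG : HasProd (fun p : Nat.Primes ↦ G p) (∏ p ∈ s, G p) :=
    hasProd_prod_of_ne_finset_one fun p hp ↦ if_neg fun hpM ↦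
      hp (mem_preimage.mpr (Nat.mem_primeFactors.mpr ⟨p.prop, hpM, hM⟩))
  have hprod := (hasProd_eulerFactorGL₂.mul hG).congr_fun fun p ↦ show
      (if (p : ℕ) ∣ M then (1 - ((p : ℝ) ^ 3)⁻¹)⁻¹ else eulerFactorGL₂ p) = _ by
    simp only [G]
    split_ifs
    · rw [mul_div_cancel₀ _ (eulerFactorGL₂_pos p.prop).ne']
    · rw [mul_one]
  rw [(hasProd_mulShift_totientDivCardGL₂ hM).unique hprod,
    prod_preimage _ _ _ _ fun p hp hp' ↦ (hp' ⟨⟨p, Nat.prime_of_mem_primeFactors hp⟩, rfl⟩).elim]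
  exact congrArg _ (prod_congr rfl fun p hp ↦ if_pos (Nat.dvd_of_mem_primeFactors hp))

theorem totientDivCardGL₂_prime_pow_mul {p e : ℕ} (hp : p.Prime) (he : e ≠ 0) :
    totientDivCardGL₂ (p ^ e) * ((1 - ((p : ℝ) ^ 3)⁻¹)⁻¹ / eulerFactorGL₂ p) =
      (((p : ℝ) ^ e) ^ 3)⁻¹ *
        ((1 - ((p : ℝ) ^ 2)⁻¹) * (1 - ((p : ℝ) ^ 3)⁻¹) + ((p : ℝ) ^ 3)⁻¹)⁻¹ := by
  have h2 := hp.one_lt_cast_pow two_ne_zero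
  have h3 := hp.one_lt_cast_pow three_ne_zero
  have : (p : ℝ) ≠ 0 := by exact_mod_cast hp.ne_zero
  have : (p : ℝ) ^ 2 - 1 ≠ 0 := by linarith
  have : (p : ℝ) ^ 3 - 1 ≠ 0 := by linarith
  rw [totientDivCardGL₂_prime_pow hp he, eulerFactorGL₂, ← pow_mul, mul_comm e, pow_mul, inv_pow]
  field_simp

theorem tsum_totientDivCardGL₂_mul_right {M : ℕ} (hM : M ≠ 0) :
    ∑' k, totientDivCardGL₂ (k * M) = (∑' n, totientDivCardGL₂ n) * (((M : ℝ) ^ 3)⁻¹ *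
      ∏ ℓ ∈ M.primeFactors,
        ((1 - ((ℓ : ℝ) ^ 2)⁻¹) * (1 - ((ℓ : ℝ) ^ 3)⁻¹) + ((ℓ : ℝ) ^ 3)⁻¹)⁻¹) := by
  have hgM := totientDivCardGL₂_ne_zero hM
  have hlocal : totientDivCardGL₂ M *
      ∏ p ∈ M.primeFactors, (1 - ((p : ℝ) ^ 3)⁻¹)⁻¹ / eulerFactorGL₂ p = ((M : ℝ) ^ 3)⁻¹ *
        ∏ ℓ ∈ M.primeFactors,
          ((1 - ((ℓ : ℝ) ^ 2)⁻¹) * (1 - ((ℓ : ℝ) ^ 3)⁻¹) + ((ℓ : ℝ) ^ 3)⁻¹)⁻¹ := by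
    have hM3 : ((M : ℝ) ^ 3)⁻¹ = ∏ p ∈ M.primeFactors, (((p : ℝ) ^ M.factorization p) ^ 3)⁻¹ := by
      conv_lhs => rw [Nat.prod_primeFactors_pow_factorization hM]
      push_cast
      rw [← prod_pow, ← prod_inv_distrib]
    rw [isMultiplicative_totientDivCardGL₂.map_eq_prod_of_primeFactors_subset hM subset_rfl, hM3,
      ← prod_mul_distrib, ← prod_mul_distrib]
    exact prod_congr rfl fun p hp ↦ totientDivCardGL₂_prime_pow_mul
      (Nat.prime_of_mem_primeFactors hp) (Finsupp.mem_support_iff.mp hp)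
  calc ∑' k, totientDivCardGL₂ (k * M)
      = totientDivCardGL₂ M * ∑' k, totientDivCardGL₂.mulShift M k := by
        rw [← tsum_mul_left]
        exact tsum_congr fun k ↦ (mul_div_cancel₀ _ hgM).symm
    _ = _ := by
        rw [tsum_mulShift_totientDivCardGL₂ hM, mul_left_comm, hlocal]

theorem tsum_ite_dvd_eq_tsum_mul_right {α : Type*} [AddCommMonoid α] [TopologicalSpace α]
    (f : ℕ → α) {M : ℕ} (hM : M ≠ 0) :
    ∑' m, (if M ∣ m then f m else 0) = ∑' k, f (k * M) := by
  rw [← (mul_left_injective₀ hM).tsum_eq fun m hm ↦ ?_]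
  · exact tsum_congr fun k ↦ if_pos (dvd_mul_left M k)
  · obtain ⟨k, rfl⟩ : M ∣ m := by by_contra h; simp [h] at hm
    exact ⟨k, mul_comm k M⟩

theorem tsum_ite_dvd_two_mul {f : ℕ → ℝ} (hf : Summable f) {M : ℕ} (hM : M ≠ 0) :
    ∑' m, (if M ∣ m then 2 else 1) * f m = ∑' m, f m + ∑' k, f (k * M) := by
  have hsplit (m : ℕ) : (if M ∣ m then 2 else 1) * f m = f m + if M ∣ m then f m else 0 := by
    split_ifs <;> ring
  have hind : Summable fun m ↦ if M ∣ m then f m else 0 :=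
    (hf.indicator {m | M ∣ m}).congr fun m ↦ by simp [Set.indicator_apply]
  rw [tsum_congr hsplit, hf.tsum_add hind, tsum_ite_dvd_eq_tsum_mul_right f hM]

/-- Fix a positive integer `M`.  With `f(m) = 2φ(m)/|GL₂(ℤ/mℤ)|` if `M ∣ m` and
`f(m) = φ(m)/|GL₂(ℤ/mℤ)|` otherwise, one has
`∑_{m≥1} f(m) = C_{d₁}·(1 + M^{-3} ∏_{ℓ ∣ M} ((1−ℓ^{-2})(1−ℓ^{-3}) + ℓ^{-3})⁻¹)`,
where `C_{d₁} = ∑_{m≥1} φ(m)/|GL₂(ℤ/mℤ)| = ∏_ℓ (1 + ℓ²/((ℓ²−1)(ℓ³−1)))`. -/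
theorem stmt_17 (M : ℕ) (hM : 0 < M) :
    (∑' m : ℕ+, (if M ∣ (m : ℕ) then 2 else 1) *
        (Nat.totient m : ℝ) / (Nat.card (GL (Fin 2) (ZMod m)) : ℝ) =
      (∑' m : ℕ+, (Nat.totient m : ℝ) / (Nat.card (GL (Fin 2) (ZMod m)) : ℝ)) *
        (1 + ((M : ℝ) ^ 3)⁻¹ *
          ∏ ℓ ∈ M.primeFactors,
            ((1 - ((ℓ : ℝ) ^ 2)⁻¹) * (1 - ((ℓ : ℝ) ^ 3)⁻¹) + ((ℓ : ℝ) ^ 3)⁻¹)⁻¹)) ∧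
    ∑' m : ℕ+, (Nat.totient m : ℝ) / (Nat.card (GL (Fin 2) (ZMod m)) : ℝ) =
      ∏' ℓ : Nat.Primes,
        (1 + (ℓ : ℝ) ^ 2 / (((ℓ : ℝ) ^ 2 - 1) * ((ℓ : ℝ) ^ 3 - 1))) := by
  simp only [mul_div_assoc, ← totientDivCardGL₂_apply]
  have hC : ∑' m : ℕ+, totientDivCardGL₂ m = ∑' n, totientDivCardGL₂ n :=
    tsum_pnat_eq_tsum_of_eq_zero totientDivCardGL₂.map_zero
  refine ⟨?_, hC.trans hasProd_eulerFactorGL₂.tprod_eq.symm⟩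
  rw [hC, tsum_pnat_eq_tsum_of_eq_zero
      (f := fun m ↦ (if M ∣ m then 2 else 1) * totientDivCardGL₂ m) (by simp),
    tsum_ite_dvd_two_mul summable_norm_totientDivCardGL₂.of_norm hM.ne',
    tsum_totientDivCardGL₂_mul_right hM.ne']
  ring
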